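/- For any ceers R and S: if S < R ⊕ Id_1 (i.e., S ≤ R ⊕ Id_1 but R ⊕ Id_1 ≰ S) then S ≤ R; and if R < S then R ⊕ Id_1 ≤ S. -/

import Mathlib

/-- Computable reducibility of binary relations on ℕ. -/
def CompReduces (R S : ℕ → ℕ → Prop) : Prop :=
  ∃ f : ℕ → ℕ, Computable f ∧ ∀ x y, (R x y ↔ S (f x) (f y))

/-- Bi-reducibility. -/
def CompEquiv (R S : ℕ → ℕ → Prop) : Prop :=
  CompReduces R S ∧ CompReduces S R

/-- Uniform join: evens code `R`, odds code `S`. -/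
def UJoin (R S : ℕ → ℕ → Prop) : ℕ → ℕ → Prop := fun x y =>
  (∃ u v, x = 2 * u ∧ y = 2 * v ∧ R u v) ∨
  (∃ u v, x = 2 * u + 1 ∧ y = 2 * v + 1 ∧ S u v)

/-- Congruence modulo `n` (for `n ≥ 1` this has exactly `n` classes). -/
def IdN (n : ℕ) : ℕ → ℕ → Prop := fun x y => x % n = y % n

/-- `R ⊕ Id_k`, with the convention `R ⊕ Id_0 = R`. -/
def OplusId (R : ℕ → ℕ → Prop) (k : ℕ) : ℕ → ℕ → Prop :=
  if k = 0 then R else UJoin R (IdN k)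

/-- A ceer: a computably enumerable equivalence relation on ℕ. -/
def IsCeer (R : ℕ → ℕ → Prop) : Prop :=
  Equivalence R ∧ REPred (fun p : ℕ × ℕ => R p.1 p.2)

/-- `R` has infinitely many equivalence classes. -/
def InfiniteClasses (R : ℕ → ℕ → Prop) : Prop :=
  ∀ A : Finset ℕ, ∃ x, ∀ a ∈ A, ¬ R x a

/-- `R` has exactly `n` equivalence classes. -/
def ExactlyNClasses (R : ℕ → ℕ → Prop) (n : ℕ) : Prop :=
  ∃ f : Fin n → ℕ, (∀ i j, i ≠ j → ¬ R (f i) (f j)) ∧ ∀ x, ∃ i, R x (f i)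

/-- `R` has an infinite c.e. transversal. -/
def HasInfiniteTransversal (R : ℕ → ℕ → Prop) : Prop :=
  ∃ W : Set ℕ, REPred (· ∈ W) ∧ W.Infinite ∧
    ∀ x ∈ W, ∀ y ∈ W, x ≠ y → ¬ R x y

/-- A dark ceer: infinitely many classes, no infinite c.e. transversal. -/
def IsDark (R : ℕ → ℕ → Prop) : Prop :=
  IsCeer R ∧ InfiniteClasses R ∧ ¬ HasInfiniteTransversal R

/-- `R ≤_I S`: `R ≤ S ⊕ Id_k` for some `k`. -/
def ReducesI (R S : ℕ → ℕ → Prop) : Prop :=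
  ∃ k, CompReduces R (OplusId S k)

/-- The c.e. set `W` intersects infinitely many `R`-classes. -/
def MeetsInfManyClasses (R : ℕ → ℕ → Prop) (W : Set ℕ) : Prop :=
  ∀ A : Finset ℕ, ∃ x ∈ W, ∀ a ∈ A, ¬ R x a

/-! A reduction `f : X ≤ Y` into a ceer `Y` either meets every `Y`-class, and then a computable
choice of preimages (found by dovetailing) is a reduction `Y ≤ X`, or it misses some class `[c]`.
For `R < S` the first case is excluded, and sending the new class of `R ⊕ Id₁` to `c` extends `f`
to `R ⊕ Id₁ ≤ S`. For `S < R ⊕ Id₁` it is excluded as well: if `f` misses the class of `2c`,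
merging the odd class into `[c]_R` gives `S ≤ R`; if it misses the odd class, halving does. -/

section Choice

open Nat.Partrec (Code)
open Nat.Partrec.Code

theorem REPred.comp {α β : Type*} [Primcodable α] [Primcodable β] {p : α → Prop} {g : β → α}
    (hp : REPred p) (hg : Computable g) : REPred fun b => p (g b) :=
  Partrec.comp hp hg

theorem REPred.and {α : Type*} [Primcodable α] {p q : α → Prop} (hp : REPred p)
    (hq : REPred q) : REPred fun a => p a ∧ q a := by
  refine (hp.bind (hq.comp Computable.fst).to₂).of_eq fun a => ?_
  ext
  simp [Part.mem_assert_iff, Part.mem_bind_iff]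

theorem REPred.exists_code_evaln_isSome {p : ℕ → Prop} (hp : REPred p) :
    ∃ c : Code, ∀ n, p n ↔ ∃ k, (evaln k c n).isSome := by
  obtain ⟨c, hc⟩ := Code.exists_code.1 (Partrec.nat_iff.1 (hp.map (Computable.const 0).to₂))
  refine ⟨c, fun n => ?_⟩
  have : p n ↔ (eval c n).Dom := by
    rw [hc]
    exact ⟨fun h => ⟨h, trivial⟩, fun ⟨h, _⟩ => h⟩
  simp only [this, Part.dom_iff_mem, evaln_complete, Option.isSome_iff_exists, Option.mem_def]
  exact exists_comm

theorem REPred.exists_computable_choice {Q : ℕ → ℕ → Prop}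
    (hQ : REPred fun p : ℕ × ℕ => Q p.1 p.2) (htot : ∀ u, ∃ y, Q u y) :
    ∃ g : ℕ → ℕ, Computable g ∧ ∀ u, Q u (g u) := by
  obtain ⟨c, hc⟩ := (hQ.comp Computable.unpair).exists_code_evaln_isSome
  have hQc : ∀ u y, Q u y ↔ ∃ k, (evaln k c (Nat.pair u y)).isSome := fun u y => by
    simpa only [Nat.unpair_pair] using hc (Nat.pair u y)
  -- dovetailing: stage `⟨y, k⟩` proposes `y` if the search for `Q u y` halts within `k` steps
  let stage (u n : ℕ) : Option ℕ :=
    (evaln n.unpair.2 c (Nat.pair u n.unpair.1)).map fun _ => n.unpair.1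
  have hstage : Computable₂ stage := by
    apply Computable.option_map
    · exact primrec_evaln.to_comp.comp <|
        ((Computable.snd.comp (Computable.unpair.comp Computable.snd)).pair
          (Computable.const c)).pair (Primrec₂.natPair.to_comp.comp Computable.fst
            (Computable.fst.comp (Computable.unpair.comp Computable.snd)))
    · exact ((Computable.fst.comp (Computable.unpair.comp Computable.snd)).comp
        Computable.fst).to₂
  have hstage_sound : ∀ u n y, y ∈ stage u n → Q u y := by
    intro u n y hy
    obtain ⟨v, hv, rfl⟩ := Option.map_eq_some_iff.1 hy
    exact (hQc u _).2 ⟨_, Option.isSome_iff_exists.2 ⟨v, hv⟩⟩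
  have hdom : ∀ u, (Nat.rfindOpt (stage u)).Dom := fun u => by
    obtain ⟨y, hy⟩ := htot u
    obtain ⟨k, hk⟩ := (hQc u y).1 hy
    obtain ⟨v, hv⟩ := Option.isSome_iff_exists.1 hk
    exact Nat.rfindOpt_dom.2 ⟨Nat.pair y k, y, by simp [stage, hv]⟩
  refine ⟨fun u => (Nat.rfindOpt (stage u)).get (hdom u),
    (Partrec.rfindOpt hstage).of_eq_tot fun u => Part.get_mem _, fun u => ?_⟩
  obtain ⟨n, hn⟩ := Nat.rfindOpt_spec (Part.get_mem (hdom u))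
  exact hstage_sound u n _ hn

end Choice

section UJoin

variable {X Y R T : ℕ → ℕ → Prop} {g : ℕ → ℕ} {c u v : ℕ}

@[simp]
theorem uJoin_two_mul_two_mul : UJoin X T (2 * u) (2 * v) ↔ X u v := by
  refine ⟨?_, fun h => Or.inl ⟨u, v, rfl, rfl, h⟩⟩
  rintro (⟨a, b, ha, hb, h⟩ | ⟨a, b, ha, hb, -⟩)
  · obtain rfl : a = u := by omega
    obtain rfl : b = v := by omega
    exact h
  · omega

@[simp]
theorem not_uJoin_two_mul_two_mul_add_one : ¬ UJoin X T (2 * u) (2 * v + 1) := by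
  rintro (⟨a, b, ha, hb, -⟩ | ⟨a, b, ha, hb, -⟩) <;> omega

@[simp]
theorem not_uJoin_two_mul_add_one_two_mul : ¬ UJoin X T (2 * u + 1) (2 * v) := by
  rintro (⟨a, b, ha, hb, -⟩ | ⟨a, b, ha, hb, -⟩) <;> omega

@[simp]
theorem uJoin_idN_one_two_mul_add_one : UJoin X (IdN 1) (2 * u + 1) (2 * v + 1) :=
  Or.inr ⟨u, v, rfl, rfl, by simp [IdN, Nat.mod_one]⟩

def joinMap (g : ℕ → ℕ) (c n : ℕ) : ℕ :=
  if n % 2 = 0 then g (n / 2) else c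

@[simp]
theorem joinMap_two_mul : joinMap g c (2 * u) = g u := by
  simp [joinMap]

@[simp]
theorem joinMap_two_mul_add_one : joinMap g c (2 * u + 1) = c := by
  simp [joinMap]

theorem computablePred_mod_two_eq_zero : ComputablePred fun n : ℕ => n % 2 = 0 :=
  PrimrecPred.computablePred <|
    Primrec.eq.comp (Primrec.nat_mod.comp Primrec.id (Primrec.const 2)) (Primrec.const 0)

theorem Computable.joinMap (hg : Computable g) (c : ℕ) : Computable (joinMap g c) :=
  ComputablePred.ite (hg.comp (Primrec.nat_div.to_comp.comp Computable.id (Computable.const 2)))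
    (Computable.const c) computablePred_mod_two_eq_zero

theorem uJoin_idN_one_iff_joinMap (hY : Equivalence Y) (hg : ∀ u v, X u v ↔ Y (g u) (g v))
    {n m : ℕ} (hn : ∀ u, n = 2 * u → ¬ Y c (g u)) (hm : ∀ v, m = 2 * v → ¬ Y c (g v)) :
    UJoin X (IdN 1) n m ↔ Y (joinMap g c n) (joinMap g c m) := by
  obtain ⟨u, rfl | rfl⟩ := Nat.even_or_odd' n <;> obtain ⟨v, rfl | rfl⟩ := Nat.even_or_odd' m
  · simpa using hg u v
  · simpa using fun h => hn u rfl (hY.symm h)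
  · simpa using hm v rfl
  · simpa using hY.refl c

theorem uJoin_idN_one_iff (hR : Equivalence R) {n m : ℕ} :
    UJoin R (IdN 1) n m ↔ n % 2 = m % 2 ∧ R (joinMap id 0 n) (joinMap id 0 m) := by
  obtain ⟨u, rfl | rfl⟩ := Nat.even_or_odd' n <;> obtain ⟨v, rfl | rfl⟩ := Nat.even_or_odd' m
  · simp
  · simp
  · simp
  · simpa using hR.refl 0

theorem IsCeer.uJoin_idN_one (hR : IsCeer R) : IsCeer (UJoin R (IdN 1)) := by
  have key := fun n m => uJoin_idN_one_iff hR.1 (n := n) (m := m)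
  refine ⟨⟨fun n => (key n n).2 ⟨rfl, hR.1.refl _⟩, fun h => ?_, fun h₁ h₂ => ?_⟩, ?_⟩
  · obtain ⟨hp, hr⟩ := (key _ _).1 h
    exact (key _ _).2 ⟨hp.symm, hR.1.symm hr⟩
  · obtain ⟨hp₁, hr₁⟩ := (key _ _).1 h₁
    obtain ⟨hp₂, hr₂⟩ := (key _ _).1 h₂
    exact (key _ _).2 ⟨hp₁.trans hp₂, hR.1.trans hr₁ hr₂⟩
  · have hjm := Computable.joinMap Computable.id 0
    refine (REPred.and ?_ ?_).of_eq fun p => (key p.1 p.2).symm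
    · exact ComputablePred.to_re <| PrimrecPred.computablePred <| Primrec.eq.comp
        (Primrec.nat_mod.comp Primrec.fst (Primrec.const 2))
        (Primrec.nat_mod.comp Primrec.snd (Primrec.const 2))
    · exact hR.2.comp ((hjm.comp Computable.fst).pair (hjm.comp Computable.snd))

end UJoin

section Reductions

variable {X Y R S : ℕ → ℕ → Prop} {f : ℕ → ℕ}

/-- If `f` meets every class of `Y`, a computable choice of preimages is a reduction `Y ≤ X`. -/
theorem compReduces_or_exists_forall_not_rel (hY : IsCeer Y) (hf : Computable f)
    (hfr : ∀ x y, X x y ↔ Y (f x) (f y)) : CompReduces Y X ∨ ∃ c, ∀ x, ¬ Y c (f x) := by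
  refine (em (∀ c, ∃ x, Y c (f x))).imp (fun hmeet => ?_) (fun hmiss => by simpa using hmiss)
  obtain ⟨g, hg, hgf⟩ := REPred.exists_computable_choice (Q := fun c x => Y c (f x))
    (hY.2.comp (Computable.fst.pair (hf.comp Computable.snd))) hmeet
  refine ⟨g, hg, fun c d => ?_⟩
  rw [hfr]
  exact ⟨fun h => hY.1.trans (hY.1.trans (hY.1.symm (hgf c)) h) (hgf d),
    fun h => hY.1.trans (hY.1.trans (hgf c) h) (hY.1.symm (hgf d))⟩

theorem compReduces_uJoin_idN_one_of_forall_not_rel (hY : Equivalence Y) (hf : Computable f)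
    (hfr : ∀ x y, X x y ↔ Y (f x) (f y)) {c : ℕ} (hc : ∀ x, ¬ Y c (f x)) :
    CompReduces (UJoin X (IdN 1)) Y :=
  ⟨joinMap f c, hf.joinMap c, fun _ _ =>
    uJoin_idN_one_iff_joinMap hY hfr (fun u _ => hc u) (fun v _ => hc v)⟩

theorem compReduces_of_uJoin_idN_one_of_forall_not_rel (hR : Equivalence R) (hf : Computable f)
    (hfr : ∀ x y, S x y ↔ UJoin R (IdN 1) (f x) (f y)) {z : ℕ}
    (hz : ∀ x, ¬ UJoin R (IdN 1) z (f x)) : CompReduces S R := by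
  obtain ⟨c, rfl | rfl⟩ := Nat.even_or_odd' z
  · have havoid : ∀ x u, f x = 2 * u → ¬ R c u := fun x u hu h => hz x (by simpa [hu] using h)
    refine ⟨fun x => joinMap id c (f x), (Computable.joinMap Computable.id c).comp hf,
      fun x y => ?_⟩
    rw [hfr]
    exact uJoin_idN_one_iff_joinMap hR (fun _ _ => Iff.rfl) (havoid x) (havoid y)
  · -- the odd class is avoided, so `f` takes only even values
    have heven : ∀ x, 2 * (f x / 2) = f x := fun x => by
      obtain ⟨u, hu | hu⟩ := Nat.even_or_odd' (f x)
      · omega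
      · exact absurd (hu ▸ uJoin_idN_one_two_mul_add_one) (hz x)
    refine ⟨fun x => f x / 2, Primrec.nat_div.to_comp.comp hf (Computable.const 2),
      fun x y => ?_⟩
    rw [hfr, ← uJoin_two_mul_two_mul (X := R) (T := IdN 1), heven, heven]

end Reductions

theorem oplus_id1_facts (R S : ℕ → ℕ → Prop) (hR : IsCeer R) (hS : IsCeer S) :
    (CompReduces S (UJoin R (IdN 1)) → ¬ CompReduces (UJoin R (IdN 1)) S →
      CompReduces S R) ∧
    (CompReduces R S → ¬ CompReduces S R → CompReduces (UJoin R (IdN 1)) S) := by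
  constructor
  · rintro ⟨f, hf, hfr⟩ hno
    obtain hinv | ⟨z, hz⟩ := compReduces_or_exists_forall_not_rel hR.uJoin_idN_one hf hfr
    · exact absurd hinv hno
    · exact compReduces_of_uJoin_idN_one_of_forall_not_rel hR.1 hf hfr hz
  · rintro ⟨f, hf, hfr⟩ hno
    obtain hinv | ⟨c, hc⟩ := compReduces_or_exists_forall_not_rel hS hf hfr
    · exact absurd hinv hno
    · exact compReduces_uJoin_idN_one_of_forall_not_rel hS.1 hf hfr hc
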